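/- Let $n \ge 3$ be odd and $G_r^n$ the graph family from the paper. Then the maximal degree of a circuit of the toric ideal $I_{G_r^n}$ satisfies $t_{A_{G_r^n}} \le n + (2r-1)(n-1)$. -/

import Mathlib

/-!
Each vertex `v` of `G_r^n` is a cut vertex separating everything grown out of `v` from the rest.
Hence every cycle lies in a single block, i.e. one of the `n`-cycles of the construction (the one
attached at the parent of its deepest vertex), and has length `n`. A path joining two
vertex-disjoint cycles can only use edges of the root block and of blocks strictly above one of
the two cycles: any other block would have to be entered and left through its attachment vertex.
So it meets at most `1 + 2(r - 1)` blocks, and an injective path has at most `n - 1` edges in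
each of them.
-/

/-- Vertices of the graph `G_r^n` of the paper: a vertex is addressed by a position
`q ∈ Fin n` on the root `n`-cycle together with a list of at most `r` further positions,
each in `{1, …, n-1}` (encoded as `Fin (n-1)`), recording in which vertex of which
successively attached `n`-cycle it lies.  A vertex with address-tail of length `m < r` is
exactly a degree-two vertex of `G_m^n`, and the unique `n`-cycle attached to it at step
`m+1` has vertices `(q, l ++ [j])`, `j ∈ Fin (n-1)` (position `j+1` on that cycle),
together with the attachment vertex `(q, l)` itself (position `0`). -/
def GVert (n r : ℕ) := Fin n × { l : List (Fin (n - 1)) // l.length ≤ r }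

/-- The basic (one-directional) edge relation of `G_r^n`: consecutive vertices on the root
cycle; the attachment vertex joined to the first (position `1`, i.e. `j = 0`) and last
(position `n-1`, i.e. `j = n-2`) vertex of the cycle attached to it; or consecutive
vertices of an attached cycle. -/
def GRel (n r : ℕ) : GVert n r → GVert n r → Prop := fun a b =>
  (a.2.1 = [] ∧ b.2.1 = [] ∧ (b.1 : ℕ) = ((a.1 : ℕ) + 1) % n) ∨
  (a.1 = b.1 ∧ ∃ j : Fin (n - 1), b.2.1 = a.2.1 ++ [j] ∧ ((j : ℕ) = 0 ∨ (j : ℕ) = n - 2)) ∨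
  (a.1 = b.1 ∧ ∃ (l : List (Fin (n - 1))) (j j' : Fin (n - 1)),
      a.2.1 = l ++ [j] ∧ b.2.1 = l ++ [j'] ∧ (j' : ℕ) = (j : ℕ) + 1)

/-- The graph `G_r^n` of the paper: `G_0^n` is an `n`-cycle and `G_r^n` is obtained from
`G_{r-1}^n` by attaching an `n`-cycle (one-point union) at each degree-two vertex. -/
def Gc (n r : ℕ) : SimpleGraph (GVert n r) where
  Adj a b := a ≠ b ∧ (GRel n r a b ∨ GRel n r b a)
  symm := ⟨fun a b h => ⟨h.1.symm, h.2.symm⟩⟩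
  loopless := ⟨fun _ h => h.1 rfl⟩

/-- `c : Fin m → V` lists the vertices of a cycle of length `m` of `G` in order. -/
def IsCycleOn {V : Type*} (G : SimpleGraph V) (m : ℕ) (c : Fin m → V) : Prop :=
  3 ≤ m ∧ Function.Injective c ∧
    ∀ i : Fin m, G.Adj (c i) (c ⟨((i : ℕ) + 1) % m, Nat.mod_lt _ i.pos⟩)

/-- `p : Fin (t+1) → V` lists the vertices of a path of length `t` of `G` in order. -/
def IsPathOn {V : Type*} (G : SimpleGraph V) (t : ℕ) (p : Fin (t + 1) → V) : Prop :=
  Function.Injective p ∧ ∀ i : Fin t, G.Adj (p i.castSucc) (p i.succ)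

open Finset Function

lemma exists_flip_of_le {P : ℕ → Prop} {a b : ℕ} (hab : a ≤ b) (ha : P a) (hb : ¬ P b) :
    ∃ k, a ≤ k ∧ k < b ∧ P k ∧ ¬ P (k + 1) := by
  induction b, hab using Nat.le_induction with
  | base => exact absurd ha hb
  | succ b hab ih =>
    by_cases h : P b
    · exact ⟨b, hab, b.lt_succ_self, h, hb⟩
    · obtain ⟨k, hak, hkb, hk, hk'⟩ := ih h
      exact ⟨k, hak, hkb.trans b.lt_succ_self, hk, hk'⟩

lemma List.IsPrefix.eq_or_eq_append_singleton {α : Type*} {l₁ l₂ : List α} (h : l₁ <+: l₂)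
    (hl : l₂.length ≤ l₁.length + 1) : l₂ = l₁ ∨ ∃ a, l₂ = l₁ ++ [a] := by
  obtain ⟨_ | ⟨a, _ | ⟨_, _⟩⟩, rfl⟩ := h
  · simp
  · exact Or.inr ⟨a, rfl⟩
  · simp at hl

open Fin.CommRing in
lemma ZMod.surjective_of_injective_of_step {m n : ℕ} [NeZero m] [NeZero n] (hm : 3 ≤ m)
    {ψ : Fin m → ZMod n} (hinj : Injective ψ)
    (hstep : ∀ i, ψ (i + 1) = ψ i + 1 ∨ ψ i = ψ (i + 1) + 1) : Surjective ψ := by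
  -- if `ψ i + 1` were missed, both neighbours of `i` would map to `ψ i - 1`
  have hclosed : ∀ i, ∃ i', ψ i' = ψ i + 1 := by
    intro i
    by_contra! h
    have hnext : ψ (i + 1) + 1 = ψ i := ((hstep i).resolve_left (h _)).symm
    have hprev : ψ (i - 1) + 1 = ψ i := by
      have := hstep (i - 1)
      rw [sub_add_cancel] at this
      exact (this.resolve_right (h _)).symm
    have hi : i + 1 = i - 1 := hinj (add_right_cancel (hnext.trans hprev.symm))
    have h2 : ((2 : ℕ) : Fin m) = 0 := by push_cast; linear_combination hi
    have := Nat.le_of_dvd two_pos (Fin.natCast_eq_zero.1 h2)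
    omega
  have hreach : ∀ k : ℕ, ∃ i, ψ i = ψ 0 + k := by
    intro k
    induction k with
    | zero => exact ⟨0, by simp⟩
    | succ k ih =>
      obtain ⟨i, hi⟩ := ih
      obtain ⟨i', hi'⟩ := hclosed i
      exact ⟨i', by rw [hi', hi]; push_cast; ring⟩
  intro z
  obtain ⟨i, hi⟩ := hreach (z - ψ 0).val
  exact ⟨i, by rw [hi, ZMod.natCast_zmod_val]; ring⟩

namespace SimpleGraph

variable {V : Type*} {G : SimpleGraph V}

def ExitsOnlyThrough (G : SimpleGraph V) (T : Set V) (v : V) : Prop :=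
  ∀ ⦃a b⦄, G.Adj a b → a ∈ T → b ∉ T → b = v

lemma ExitsOnlyThrough.exists_eq_of_walk {T : Set V} {v : V} (h : G.ExitsOnlyThrough T v)
    {w : ℕ → V} {A a B : ℕ} (hadj : ∀ k, A ≤ k → k < B → G.Adj (w k) (w (k + 1)))
    (hAa : A ≤ a) (haB : a ≤ B) (hA : w A ∉ T) (ha : w a ∈ T) (hB : w B ∉ T) :
    ∃ i j, A ≤ i ∧ i < j ∧ j ≤ B ∧ w i = v ∧ w j = v := by
  obtain ⟨i, hAi, hia, hi, hi'⟩ := exists_flip_of_le (P := fun k => w k ∉ T) hAa hA (not_not.2 ha)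
  obtain ⟨j, haj, hjB, hj, hj'⟩ := exists_flip_of_le (P := fun k => w k ∈ T) haB ha hB
  exact ⟨i, j + 1, hAi, by omega, hjB, h (hadj i hAi (by omega)).symm (not_not.1 hi') hi,
    h (hadj j (by omega) hjB) hj hj'⟩

end SimpleGraph

section CyclesAndPaths

open SimpleGraph Fin.NatCast

variable {V : Type*} {G : SimpleGraph V} {T : Set V} {v : V}

lemma IsCycleOn.adj_add_one {m : ℕ} [NeZero m] {c : Fin m → V} (hc : IsCycleOn G m c)
    (i : Fin m) : G.Adj (c i) (c (i + 1)) := by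
  convert hc.2.2 i using 2
  ext
  simp [Fin.val_add]

lemma IsCycleOn.mem_or_eq_of_exitsOnlyThrough {m : ℕ} {c : Fin m → V} (hc : IsCycleOn G m c)
    (h : G.ExitsOnlyThrough T v) {a : Fin m} (ha : c a ∈ T) (b : Fin m) : c b ∈ T ∨ c b = v := by
  have : NeZero m := ⟨by have := hc.1; omega⟩
  by_contra! hb
  have hadj : ∀ k : ℕ, G.Adj (c k) (c (k + 1 : ℕ)) := fun k => by
    simpa using hc.adj_add_one k
  -- go once around the cycle from `b`, meeting `a` on the way
  obtain ⟨a', hba', ha'B, ha'⟩ : ∃ a' : ℕ, b.val ≤ a' ∧ a' ≤ b.val + m ∧ c a' = c a := by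
    rcases le_or_gt b.val a.val with hba | hab
    · exact ⟨a, hba, by omega, by simp⟩
    · exact ⟨a + m, by omega, by omega, by simp⟩
  obtain ⟨i, j, hbi, hij, hjB, hi, hj⟩ := h.exists_eq_of_walk (w := fun k : ℕ => c k)
    (fun k _ _ => hadj k) hba' ha'B (by simpa using hb.1) (ha'.symm ▸ ha) (by simpa using hb.1)
  have hmod : i % m = j % m := by
    simpa [Fin.ext_iff, Fin.val_natCast] using hc.2.1 (hi.trans hj.symm)
  have := Nat.le_of_dvd (by omega) ((Nat.modEq_iff_dvd' hij.le).1 hmod)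
  obtain rfl : i = b := by omega
  exact hb.2 (by simpa using hi)

lemma IsPathOn.notMem_of_exitsOnlyThrough {t : ℕ} {p : Fin (t + 1) → V} (hp : IsPathOn G t p)
    (h : G.ExitsOnlyThrough T v) (h0 : p 0 ∉ T) (ht : p (Fin.last t) ∉ T) (k : Fin (t + 1)) :
    p k ∉ T := by
  intro hk
  have hcast : ∀ i (hi : i ≤ t), ((i : ℕ) : Fin (t + 1)) = ⟨i, by omega⟩ := fun i hi =>
    Fin.ext (Fin.val_cast_of_lt (by omega))
  have hadj : ∀ i, 0 ≤ i → i < t → G.Adj (p i) (p (i + 1 : ℕ)) := fun i _ hi => by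
    rw [hcast i hi.le, hcast (i + 1) hi]
    exact hp.2 ⟨i, hi⟩
  obtain ⟨i, j, -, hij, hjt, hi, hj⟩ := h.exists_eq_of_walk (w := fun i : ℕ => p i) hadj
    (Nat.zero_le k) k.is_le (by simpa using h0) (by simpa using hk) (by simpa using ht)
  have := hp.1 (hi.trans hj.symm)
  rw [hcast i (by omega), hcast j hjt, Fin.mk.injEq] at this
  omega

lemma card_le_of_forall_edge_mem {t k : ℕ} {p : Fin (t + 1) → V} (hp : Injective p) {B : Set V}
    {f : V → ℕ} (hf : Set.InjOn f B) (hfk : ∀ x ∈ B, f x < k) {F : Finset (Fin t)}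
    (hF : ∀ i ∈ F, p i.castSucc ∈ B ∧ p i.succ ∈ B) : #F ≤ k - 1 := by
  rcases F.eq_empty_or_nonempty with rfl | hne
  · simp
  -- the heads of the edges in `F`, together with the tail of the first one
  set S := insert (F.min' hne).castSucc (F.image Fin.succ)
  have hS : #S = #F + 1 := by
    rw [card_insert_of_notMem, card_image_of_injective _ (Fin.succ_injective _)]
    simp only [mem_image, not_exists, not_and]
    intro i hi he
    have := F.min'_le i hi
    rw [Fin.ext_iff, Fin.val_succ, Fin.val_castSucc] at he
    rw [Fin.le_def] at this
    omega
  have hSB : ∀ j ∈ S, p j ∈ B := by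
    simp only [S, mem_insert, mem_image]
    rintro j (rfl | ⟨i, hi, rfl⟩)
    exacts [(hF _ (F.min'_mem hne)).1, (hF i hi).2]
  have hinj : Set.InjOn (f ∘ p) S := fun i hi j hj he => hp (hf (hSB i hi) (hSB j hj) he)
  have := card_le_card_of_injOn (f ∘ p) (t := range k)
    (fun j hj => mem_range.2 (hfk _ (hSB j hj))) hinj
  rw [card_range] at this
  omega

end CyclesAndPaths

namespace GVert

variable {n r : ℕ}

instance : DecidableEq (GVert n r) :=
  inferInstanceAs (DecidableEq (Fin n × {l : List (Fin (n - 1)) // l.length ≤ r}))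

lemma ext {x y : GVert n r} (h₁ : x.1 = y.1) (h₂ : x.2.1 = y.2.1) : x = y :=
  Prod.ext h₁ (Subtype.ext h₂)

/-- `w` is `u` or lies in the part of `G_r^n` grown out of `u` by the iterated attachments. -/
def IsAncestor (u w : GVert n r) : Prop :=
  u.1 = w.1 ∧ u.2.1 <+: w.2.1

def below (v : GVert n r) : Set (GVert n r) :=
  {x | v.IsAncestor x ∧ x ≠ v}

lemma ne_nil_of_mem_below {v x : GVert n r} (hx : x ∈ v.below) : x.2.1 ≠ [] := by
  intro h
  obtain ⟨⟨h₁, h₂⟩, hxv⟩ := hx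
  rw [h, List.prefix_nil] at h₂
  exact hxv (ext h₁.symm (h.trans h₂.symm))

lemma prefix_of_mem_below {v x : GVert n r} (hx : x ∈ v.below) {l : List (Fin (n - 1))}
    {j : Fin (n - 1)} (h : x.2.1 = l ++ [j]) : v.2.1 <+: l := by
  obtain ⟨⟨h₁, h₂⟩, hxv⟩ := hx
  rw [h, List.prefix_concat_iff] at h₂
  exact h₂.resolve_left fun e => hxv (ext h₁.symm (h.trans e.symm))

lemma exitsOnlyThrough_below (v : GVert n r) : (Gc n r).ExitsOnlyThrough v.below v := by
  intro a b hab ha hb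
  by_contra hbv
  refine hb ⟨?_, hbv⟩
  have hnil := ne_nil_of_mem_below ha
  obtain ⟨ha₁, ha₂⟩ := ha.1
  rcases hab.2 with (⟨h, -⟩ | ⟨hq, j, hb₂, -⟩ | ⟨hq, l, j, j', ha', hb₂, -⟩) |
      (⟨-, h, -⟩ | ⟨hq, j, ha', -⟩ | ⟨hq, l, j, j', hb₂, ha', -⟩)
  · exact absurd h hnil
  · exact ⟨ha₁.trans hq, hb₂ ▸ ha₂.trans (List.prefix_append _ _)⟩
  · exact ⟨ha₁.trans hq, hb₂ ▸ (prefix_of_mem_below ha ha').trans (List.prefix_append _ _)⟩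
  · exact absurd h hnil
  · exact ⟨ha₁.trans hq.symm, prefix_of_mem_below ha ha'⟩
  · exact ⟨ha₁.trans hq.symm, hb₂ ▸ (prefix_of_mem_below ha ha').trans (List.prefix_append _ _)⟩

end GVert

section Blocks

open GVert

variable {n r : ℕ}

/-- The vertex sets of the `n`-cycles making up `G_r^n`: `none` is the root cycle and `some v`
the cycle attached at `v`, which contains `v` itself. -/
def blockVerts : Option (GVert n r) → Set (GVert n r)
  | none => {x | x.2.1 = []}
  | some v => {x | x.1 = v.1 ∧ (x.2.1 = v.2.1 ∨ ∃ j, x.2.1 = v.2.1 ++ [j])}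

def blockPos : Option (GVert n r) → GVert n r → ℕ
  | none, x => x.1
  | some v, x => if x.2.1 = v.2.1 then 0 else (x.2.1.map Fin.val).getLastD 0 + 1

lemma blockPos_some_of_eq {v x : GVert n r} (h : x.2.1 = v.2.1) : blockPos (some v) x = 0 := by
  simp [blockPos, h]

lemma blockPos_some_of_eq_append {v x : GVert n r} {j : Fin (n - 1)} (h : x.2.1 = v.2.1 ++ [j]) :
    blockPos (some v) x = j + 1 := by
  simp [blockPos, h]

lemma blockPos_lt {b : Option (GVert n r)} {x : GVert n r} (hx : x ∈ blockVerts b) :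
    blockPos b x < n := by
  rcases b with _ | v
  · exact x.1.isLt
  · rcases hx.2 with h | ⟨j, h⟩
    · rw [blockPos_some_of_eq h]; exact x.1.pos
    · rw [blockPos_some_of_eq_append h]; omega

lemma blockPos_injOn (b : Option (GVert n r)) : Set.InjOn (blockPos b) (blockVerts b) := by
  intro x hx y hy hxy
  rcases b with _ | v
  · exact ext (Fin.ext hxy) (hx.trans hy.symm)
  refine ext (hx.1.trans hy.1.symm) ?_
  rcases hx.2 with hx' | ⟨j, hx'⟩ <;> rcases hy.2 with hy' | ⟨j', hy'⟩
  · rw [hx', hy']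
  · simp [blockPos_some_of_eq hx', blockPos_some_of_eq_append hy'] at hxy
  · simp [blockPos_some_of_eq_append hx', blockPos_some_of_eq hy'] at hxy
  · rw [blockPos_some_of_eq_append hx', blockPos_some_of_eq_append hy'] at hxy
    rw [hx', hy', Fin.ext (Nat.succ_injective hxy)]

lemma blockPos_step_of_rel {b : Option (GVert n r)} {x y : GVert n r} (hx : x ∈ blockVerts b)
    (hy : y ∈ blockVerts b) (hne : x ≠ y) (hxy : GRel n r x y) :
    (blockPos b y : ZMod n) = blockPos b x + 1 ∨ (blockPos b x : ZMod n) = blockPos b y + 1 := by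
  rcases b with _ | v
  · rcases hxy with ⟨-, -, h⟩ | ⟨-, j, h, -⟩ | ⟨-, l, j, j', h, -⟩
    · left
      simp only [blockPos, h, ZMod.natCast_mod, Nat.cast_add, Nat.cast_one]
    · simp [show y.2.1 = [] from hy] at h
    · simp [show x.2.1 = [] from hx] at h
  rcases hxy with ⟨h, h', -⟩ | ⟨-, j, h, hj⟩ | ⟨-, l, j, j', h, h', hj⟩
  · exact absurd (ext (hx.1.trans hy.1.symm) (h.trans h'.symm)) hne
  · rcases hx.2 with hx' | ⟨j₀, hx'⟩
    · rw [hx'] at h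
      rw [blockPos_some_of_eq hx', blockPos_some_of_eq_append h]
      rcases hj with hj | hj
      · left; simp [hj]
      · right
        rw [hj, ← Nat.cast_succ, Nat.succ_eq_add_one, show n - 2 + 1 + 1 = n by omega,
          ZMod.natCast_self, Nat.cast_zero]
    · rcases hy.2 with hy' | ⟨j₁, hy'⟩ <;> rw [hy', hx'] at h <;> simpa using congrArg List.length h
  · rcases hx.2 with hx' | ⟨j₀, hx'⟩
    · rcases hy.2 with hy' | ⟨j₁, hy'⟩
      · exact absurd (ext (hx.1.trans hy.1.symm) (hx'.trans hy'.symm)) hne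
      · rw [hy', ← hx', h] at h'
        simpa using congrArg List.length h'
    · obtain ⟨rfl, hj₀⟩ := List.append_inj' (hx'.symm.trans h) rfl
      rw [blockPos_some_of_eq_append hx', blockPos_some_of_eq_append h', hj,
        List.singleton_inj.1 hj₀]
      left
      push_cast
      ring

lemma blockPos_step {b : Option (GVert n r)} {x y : GVert n r} (hx : x ∈ blockVerts b)
    (hy : y ∈ blockVerts b) (hxy : (Gc n r).Adj x y) :
    (blockPos b y : ZMod n) = blockPos b x + 1 ∨ (blockPos b x : ZMod n) = blockPos b y + 1 := by
  rcases hxy.2 with h | h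
  · exact blockPos_step_of_rel hx hy hxy.1 h
  · exact (blockPos_step_of_rel hy hx hxy.1.symm h).symm

lemma exists_blockVerts_of_adj {x y : GVert n r} (hxy : (Gc n r).Adj x y) :
    ∃ b, x ∈ blockVerts b ∧ y ∈ blockVerts b := by
  have key : ∀ x y : GVert n r, GRel n r x y → ∃ b, x ∈ blockVerts b ∧ y ∈ blockVerts b := by
    rintro x y (⟨hx, hy, -⟩ | ⟨hq, j, hy, -⟩ | ⟨hq, l, j, j', hx, hy, -⟩)
    · exact ⟨none, hx, hy⟩
    · exact ⟨some x, ⟨rfl, Or.inl rfl⟩, hq.symm, Or.inr ⟨j, hy⟩⟩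
    · refine ⟨some (x.1, ⟨l, ?_⟩), ⟨rfl, Or.inr ⟨j, hx⟩⟩, hq.symm, Or.inr ⟨j', hy⟩⟩
      have := x.2.2
      rw [hx, List.length_append] at this
      omega
  rcases hxy.2 with h | h
  · exact key x y h
  · obtain ⟨b, hy, hx⟩ := key y x h
    exact ⟨b, hx, hy⟩

lemma mem_below_of_mem_blockVerts {v x : GVert n r} (hx : x ∈ blockVerts (some v)) (hxv : x ≠ v) :
    x ∈ v.below := by
  refine ⟨⟨hx.1.symm, ?_⟩, hxv⟩
  rcases hx.2 with h | ⟨j, h⟩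
  · exact absurd (ext hx.1 h) hxv
  · exact h ▸ List.prefix_append _ _

lemma exists_isAncestor_of_mem_below {u x : GVert n r} {b : Option (GVert n r)}
    (hu : x ∈ u.below) (hb : x ∈ blockVerts b) : ∃ w, b = some w ∧ u.IsAncestor w := by
  rcases b with _ | w
  · exact absurd hb (ne_nil_of_mem_below hu)
  refine ⟨w, rfl, hu.1.1.trans hb.1, ?_⟩
  rcases hb.2 with h | ⟨j, h⟩
  · exact h ▸ hu.1.2
  · exact prefix_of_mem_below hu h

end Blocks

section CyclesOfGc

open GVert

variable {n r m : ℕ}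

lemma IsCycleOn.range_eq_blockVerts {c : Fin m → GVert n r} (hc : IsCycleOn (Gc n r) m c)
    {b : Option (GVert n r)} (hb : ∀ i, c i ∈ blockVerts b) :
    Set.range c = blockVerts b ∧ m = n := by
  have : NeZero m := ⟨by have := hc.1; omega⟩
  have : NeZero n := ⟨(c 0).1.pos.ne'⟩
  set ψ : Fin m → ZMod n := fun i => blockPos b (c i)
  have hψ : ∀ i x, x ∈ blockVerts b → ψ i = blockPos b x → c i = x := fun i x hx h =>
    blockPos_injOn b (hb i) hx (by
      simpa [ψ, ZMod.natCast_eq_natCast_iff', Nat.mod_eq_of_lt (blockPos_lt (hb i)),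
        Nat.mod_eq_of_lt (blockPos_lt hx)] using h)
  have hinj : Injective ψ := fun i j h => hc.2.1 (hψ i (c j) (hb j) h)
  have hsurj : Surjective ψ := ZMod.surjective_of_injective_of_step hc.1 hinj fun i =>
    blockPos_step (hb i) (hb _) (hc.adj_add_one i)
  refine ⟨(Set.range_subset_iff.2 hb).antisymm fun x hx => ?_, ?_⟩
  · obtain ⟨i, hi⟩ := hsurj (blockPos b x)
    exact ⟨i, hψ i x hx hi⟩
  · simpa using Fintype.card_of_bijective ⟨hinj, hsurj⟩

lemma IsCycleOn.exists_blockVerts {c : Fin m → GVert n r} (hc : IsCycleOn (Gc n r) m c) :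
    ∃ b, Set.range c = blockVerts b ∧ m = n ∧ ∀ w ∈ b, w.2.1.length < r := by
  have hm : 0 < m := by have := hc.1; omega
  obtain ⟨i₀, -, hdeep⟩ :=
    exists_max_image univ (fun i => (c i).2.1.length) ⟨⟨0, hm⟩, mem_univ _⟩
  rcases List.eq_nil_or_concat (c i₀).2.1 with h | ⟨l, j, h⟩
  · have hb : ∀ i, c i ∈ blockVerts none := fun i =>
      List.eq_nil_of_length_eq_zero (by simpa [h] using hdeep i (mem_univ _))
    exact ⟨none, (hc.range_eq_blockVerts hb).1, (hc.range_eq_blockVerts hb).2, by simp⟩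
  rw [List.concat_eq_append] at h
  have hl : l.length < r := by
    have := (c i₀).2.2
    rw [h, List.length_append, List.length_singleton] at this
    omega
  -- the cycle lies in the cycle attached at the parent `v` of a deepest vertex
  set v : GVert n r := ((c i₀).1, ⟨l, hl.le⟩)
  have hv : c i₀ ∈ v.below := mem_below_of_mem_blockVerts ⟨rfl, Or.inr ⟨j, h⟩⟩ fun e => by
    simpa [v, h] using congrArg (fun x : GVert n r => x.2.1.length) e
  have hb : ∀ i, c i ∈ blockVerts (some v) := by
    intro i
    rcases hc.mem_or_eq_of_exitsOnlyThrough (exitsOnlyThrough_below v) hv i with hi | hi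
    · refine ⟨hi.1.1.symm, hi.1.2.eq_or_eq_append_singleton ?_⟩
      simpa [h] using hdeep i (mem_univ _)
    · exact hi ▸ ⟨rfl, Or.inl rfl⟩
  refine ⟨some v, (hc.range_eq_blockVerts hb).1, (hc.range_eq_blockVerts hb).2, fun w hw => ?_⟩
  obtain rfl := Option.some_inj.1 hw
  exact hl

lemma IsCycleOn.length_eq {c : Fin m → GVert n r} (hc : IsCycleOn (Gc n r) m c) : m = n :=
  hc.exists_blockVerts.choose_spec.2.1

end CyclesOfGc

section PathsOfGc

open GVert

variable {n r t : ℕ}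

/-- The cycles strictly between the root cycle and the cycle `b`. -/
def ancestorBlocks : Option (GVert n r) → Finset (Option (GVert n r))
  | none => ∅
  | some w => (range w.2.1.length).image fun k =>
      some (w.1, ⟨w.2.1.take k, (List.length_take_le' _ _).trans w.2.2⟩)

lemma card_ancestorBlocks_le {b : Option (GVert n r)} (hb : ∀ w ∈ b, w.2.1.length < r) :
    #(ancestorBlocks b) ≤ r - 1 := by
  rcases b with _ | w
  · simp [ancestorBlocks]
  · have := hb w rfl
    exact (card_image_le.trans (card_range _).le).trans (by omega)

lemma mem_ancestorBlocks {u w : GVert n r} (h : u.IsAncestor w) (hne : u ≠ w) :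
    some u ∈ ancestorBlocks (some w) := by
  have hlt : u.2.1.length < w.2.1.length :=
    lt_of_le_of_ne h.2.length_le fun e => hne (ext h.1 (h.2.eq_of_length e))
  simp only [ancestorBlocks, mem_image, mem_range]
  exact ⟨_, hlt, congrArg some (ext h.1.symm (List.prefix_iff_eq_take.1 h.2).symm)⟩

lemma IsPathOn.mem_ancestorBlocks_of_edge {p : Fin (t + 1) → GVert n r}
    (hp : IsPathOn (Gc n r) t p) {α₁ α₂ : Option (GVert n r)} (h0 : p 0 ∈ blockVerts α₁)
    (hlast : p (Fin.last t) ∈ blockVerts α₂) {i : Fin t} {b : Option (GVert n r)}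
    (hi : p i.castSucc ∈ blockVerts b ∧ p i.succ ∈ blockVerts b) (h₁ : b ≠ α₁) (h₂ : b ≠ α₂) :
    b ∈ insert none (ancestorBlocks α₁ ∪ ancestorBlocks α₂) := by
  rcases b with _ | u
  · exact mem_insert_self _ _
  refine mem_insert_of_mem ?_
  obtain ⟨k, hk⟩ : ∃ k, p k ∈ u.below := by
    by_cases hu : p i.castSucc = u
    · refine ⟨i.succ, mem_below_of_mem_blockVerts hi.2 fun e => ?_⟩
      exact Fin.castSucc_lt_succ.ne (hp.1 (hu.trans e.symm))
    · exact ⟨i.castSucc, mem_below_of_mem_blockVerts hi.1 hu⟩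
  -- the path cannot enter and leave the part below `u`, as both would go through `u`
  have hend : p 0 ∈ u.below ∨ p (Fin.last t) ∈ u.below := by
    by_contra! h
    exact hp.notMem_of_exitsOnlyThrough (exitsOnlyThrough_below u) h.1 h.2 k hk
  rcases hend with h | h
  · obtain ⟨w, rfl, huw⟩ := exists_isAncestor_of_mem_below h h0
    exact mem_union_left _ (mem_ancestorBlocks huw fun e => h₁ (e ▸ rfl))
  · obtain ⟨w, rfl, huw⟩ := exists_isAncestor_of_mem_below h hlast
    exact mem_union_right _ (mem_ancestorBlocks huw fun e => h₂ (e ▸ rfl))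

lemma IsPathOn.length_le {p : Fin (t + 1) → GVert n r} (hr : 1 ≤ r) (hp : IsPathOn (Gc n r) t p)
    {α₁ α₂ : Option (GVert n r)} (h0 : p 0 ∈ blockVerts α₁) (hlast : p (Fin.last t) ∈ blockVerts α₂)
    (h₁ : ∀ i : Fin t, p i.succ ∉ blockVerts α₁) (h₂ : ∀ i : Fin t, p i.castSucc ∉ blockVerts α₂)
    (hd₁ : ∀ w ∈ α₁, w.2.1.length < r) (hd₂ : ∀ w ∈ α₂, w.2.1.length < r) :
    t ≤ (2 * r - 1) * (n - 1) := by
  choose β hβ using fun i => exists_blockVerts_of_adj (hp.2 i)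
  set allowed := insert none (ancestorBlocks α₁ ∪ ancestorBlocks α₂)
  have hβ_mem : ∀ i ∈ (univ : Finset (Fin t)), β i ∈ allowed := fun i _ =>
    hp.mem_ancestorBlocks_of_edge h0 hlast (hβ i) (fun e => h₁ i (e ▸ (hβ i).2))
      (fun e => h₂ i (e ▸ (hβ i).1))
  have hcard : #allowed ≤ 2 * r - 1 := by
    have := card_ancestorBlocks_le hd₁
    have := card_ancestorBlocks_le hd₂
    have : #allowed ≤ #(ancestorBlocks α₁ ∪ ancestorBlocks α₂) + 1 := card_insert_le _ _
    have := card_union_le (ancestorBlocks α₁) (ancestorBlocks α₂)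
    omega
  calc t = ∑ b ∈ allowed, #{i | β i = b} := by simpa using card_eq_sum_card_fiberwise hβ_mem
    _ ≤ ∑ _b ∈ allowed, (n - 1) := sum_le_sum fun b _ =>
        card_le_of_forall_edge_mem hp.1 (blockPos_injOn b) (fun _ hx => blockPos_lt hx)
          fun i hi => (mem_filter.1 hi).2 ▸ hβ i
    _ = #allowed * (n - 1) := by rw [sum_const, smul_eq_mul]
    _ ≤ (2 * r - 1) * (n - 1) := Nat.mul_le_mul_right _ hcard

end PathsOfGc

theorem stmt12_general (n r : ℕ) (hr : 1 ≤ r) :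
    (∀ (k : ℕ) (c : Fin (2 * k) → GVert n r), IsCycleOn (Gc n r) (2 * k) c →
      k ≤ n + (2 * r - 1) * (n - 1)) ∧
    (∀ (m1 m2 : ℕ) (c1 : Fin m1 → GVert n r) (c2 : Fin m2 → GVert n r),
      IsCycleOn (Gc n r) m1 c1 → IsCycleOn (Gc n r) m2 c2 → Odd m1 → Odd m2 →
      (∃ x, Set.range c1 ∩ Set.range c2 = {x}) →
      (m1 + m2) / 2 ≤ n + (2 * r - 1) * (n - 1)) ∧
    (∀ (m1 m2 t : ℕ) (c1 : Fin m1 → GVert n r) (c2 : Fin m2 → GVert n r)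
        (p : Fin (t + 1) → GVert n r),
      IsCycleOn (Gc n r) m1 c1 → IsCycleOn (Gc n r) m2 c2 → Odd m1 → Odd m2 → 1 ≤ t →
      Set.range c1 ∩ Set.range c2 = ∅ →
      IsPathOn (Gc n r) t p →
      p 0 ∈ Set.range c1 → p (Fin.last t) ∈ Set.range c2 →
      (∀ i : Fin (t + 1), i ≠ 0 → i ≠ Fin.last t →
        p i ∉ Set.range c1 ∪ Set.range c2) →
      (m1 + m2 + 2 * t) / 2 ≤ n + (2 * r - 1) * (n - 1)) := by
  refine ⟨fun k c hc => ?_, fun m1 m2 c1 c2 hc1 hc2 _ _ _ => ?_, ?_⟩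
  · have := hc.length_eq
    omega
  · have := hc1.length_eq
    have := hc2.length_eq
    omega
  intro m1 m2 t c1 c2 p hc1 hc2 _ _ _ hdisj hp hp0 hpl hint
  have hdisj' := Set.disjoint_iff_inter_eq_empty.2 hdisj
  have h₁ : ∀ i : Fin t, p i.succ ∉ Set.range c1 := fun i hi => by
    by_cases hl : i.succ = Fin.last t
    · exact hdisj'.notMem_of_mem_left hi (hl ▸ hpl)
    · exact hint _ i.succ_ne_zero hl (Or.inl hi)
  have h₂ : ∀ i : Fin t, p i.castSucc ∉ Set.range c2 := fun i hi => by
    by_cases h0 : i.castSucc = 0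
    · exact hdisj'.notMem_of_mem_left (h0 ▸ hp0) hi
    · exact hint _ h0 (Fin.castSucc_ne_last i) (Or.inr hi)
  obtain ⟨α₁, hα₁, rfl, hd₁⟩ := hc1.exists_blockVerts
  obtain ⟨α₂, hα₂, rfl, hd₂⟩ := hc2.exists_blockVerts
  rw [hα₁] at hp0 h₁
  rw [hα₂] at hpl h₂
  have := hp.length_le hr hp0 hpl h₁ h₂ hd₁ hd₂
  omega

/-- The maximal degree of a circuit of the toric ideal of `G_r^n`
(odd `n ≥ 3`, `r ≥ 1`) is at most `n + (2r-1)(n-1)`.  By Villarreal's characterization a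
circuit is supported on an even cycle (degree `k` for length `2k`), two odd cycles meeting
in exactly one vertex (degree = half the number of edges), or two vertex-disjoint odd
cycles joined by a path of length `t ≥ 1` (degree = half the number of edges with the path
edges counted twice). -/
theorem stmt12 (n r : ℕ) (hn : 3 ≤ n) (hodd : Odd n) (hr : 1 ≤ r) :
    (∀ (k : ℕ) (c : Fin (2 * k) → GVert n r), IsCycleOn (Gc n r) (2 * k) c →
      k ≤ n + (2 * r - 1) * (n - 1)) ∧
    (∀ (m1 m2 : ℕ) (c1 : Fin m1 → GVert n r) (c2 : Fin m2 → GVert n r),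
      IsCycleOn (Gc n r) m1 c1 → IsCycleOn (Gc n r) m2 c2 → Odd m1 → Odd m2 →
      (∃ x, Set.range c1 ∩ Set.range c2 = {x}) →
      (m1 + m2) / 2 ≤ n + (2 * r - 1) * (n - 1)) ∧
    (∀ (m1 m2 t : ℕ) (c1 : Fin m1 → GVert n r) (c2 : Fin m2 → GVert n r)
        (p : Fin (t + 1) → GVert n r),
      IsCycleOn (Gc n r) m1 c1 → IsCycleOn (Gc n r) m2 c2 → Odd m1 → Odd m2 → 1 ≤ t →
      Set.range c1 ∩ Set.range c2 = ∅ →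
      IsPathOn (Gc n r) t p →
      p 0 ∈ Set.range c1 → p (Fin.last t) ∈ Set.range c2 →
      (∀ i : Fin (t + 1), i ≠ 0 → i ≠ Fin.last t →
        p i ∉ Set.range c1 ∪ Set.range c2) →
      (m1 + m2 + 2 * t) / 2 ≤ n + (2 * r - 1) * (n - 1)) :=
  stmt12_general n r hr
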